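/- Let μ > 1 and h < 0. If ξ¹, ξ² : ℝ² → ℝ are real-analytic functions satisfying the Killing system for the metric g = (2/(x²+y²−2h)²)·diag(1, 1/μ) on all of ℝ², then ξ¹ and ξ² are both identically zero. In particular, the metric g admits no nonzero real-analytic Killing vector field on ℝ². -/

import Mathlib

/-- Partial derivative in the first variable of a curried function `ℝ → ℝ → ℝ`. -/
noncomputable def pdx (f : ℝ → ℝ → ℝ) : ℝ → ℝ → ℝ :=
  fun x y => deriv (fun x' => f x' y) x

/-- Partial derivative in the second variable of a curried function `ℝ → ℝ → ℝ`. -/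
noncomputable def pdy (f : ℝ → ℝ → ℝ) : ℝ → ℝ → ℝ :=
  fun x y => deriv (fun y' => f x y') y

/-- The Killing system for the metric `g = (2/(x²+y²−2h)²)·diag(1, 1/μ)` on `ℝ²`:
(i) `∂ᵧξ¹ + (1/μ)∂ₓξ² = 0`;
(ii) `−4(xξ¹ + yξ²)/(x²+y²−2h) + 2∂ₓξ¹ = 0`;
(iii) `−4(xξ¹ + yξ²)/(x²+y²−2h) + 2∂ᵧξ² = 0`. -/
def KillingSystem (μ h : ℝ) (ξ1 ξ2 : ℝ → ℝ → ℝ) : Prop :=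
  ∀ x y : ℝ,
    pdy ξ1 x y + (1 / μ) * pdx ξ2 x y = 0 ∧
    -4 * (x * ξ1 x y + y * ξ2 x y) / (x ^ 2 + y ^ 2 - 2 * h) + 2 * pdx ξ1 x y = 0 ∧
    -4 * (x * ξ1 x y + y * ξ2 x y) / (x ^ 2 + y ^ 2 - 2 * h) + 2 * pdy ξ2 x y = 0

/-! Write `W = ∂ₓξ²`. The Killing equations express the first partials of `ξ¹, ξ²` through
`ξ¹, ξ², W`, and symmetry of the mixed partials of `ξ¹` and `ξ²` then does the same for `∂ₓW` and
`∂ᵧW`. The compatibility condition `∂ᵧ∂ₓW = ∂ₓ∂ᵧW` reduces to `4(1 - μ)(xξ¹ - yξ²) = 0`, so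
`xξ¹ = yξ²` as `μ ≠ 1`. Differentiating this identity in `x` and in `y` and eliminating `W` gives
`xξ¹ · ((1 + μ)(x² + y² - 2h) + 4x² + 4μy²) = 0`, where the second factor is positive. Hence
`xξ¹ = yξ² = 0` everywhere, and `ξ¹ = ξ² = 0` by continuity. -/

open Function

section PartialDerivatives

variable {f : ℝ → ℝ → ℝ} {x y : ℝ}

theorem hasDerivAt_pdx_fderiv (hf : DifferentiableAt ℝ (uncurry f) (x, y)) :
    HasDerivAt (fun t => f t y) (fderiv ℝ (uncurry f) (x, y) (1, 0)) x :=
  hf.hasFDerivAt.comp_hasDerivAt (f := fun t => (t, y)) x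
    ((hasDerivAt_id x).prodMk (hasDerivAt_const x y))

theorem hasDerivAt_pdy_fderiv (hf : DifferentiableAt ℝ (uncurry f) (x, y)) :
    HasDerivAt (fun t => f x t) (fderiv ℝ (uncurry f) (x, y) (0, 1)) y :=
  hf.hasFDerivAt.comp_hasDerivAt (f := fun t => (x, t)) y
    ((hasDerivAt_const y x).prodMk (hasDerivAt_id y))

theorem pdx_eq_fderiv (hf : DifferentiableAt ℝ (uncurry f) (x, y)) :
    pdx f x y = fderiv ℝ (uncurry f) (x, y) (1, 0) :=
  (hasDerivAt_pdx_fderiv hf).deriv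

theorem pdy_eq_fderiv (hf : DifferentiableAt ℝ (uncurry f) (x, y)) :
    pdy f x y = fderiv ℝ (uncurry f) (x, y) (0, 1) :=
  (hasDerivAt_pdy_fderiv hf).deriv

theorem hasDerivAt_pdx (hf : DifferentiableAt ℝ (uncurry f) (x, y)) :
    HasDerivAt (fun t => f t y) (pdx f x y) x :=
  pdx_eq_fderiv hf ▸ hasDerivAt_pdx_fderiv hf

theorem hasDerivAt_pdy (hf : DifferentiableAt ℝ (uncurry f) (x, y)) :
    HasDerivAt (fun t => f x t) (pdy f x y) y :=
  pdy_eq_fderiv hf ▸ hasDerivAt_pdy_fderiv hf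

theorem pdx_eq_of_hasDerivAt {a : ℝ} (h : HasDerivAt (fun t => f t y) a x) : pdx f x y = a :=
  h.deriv

theorem pdy_eq_of_hasDerivAt {a : ℝ} (h : HasDerivAt (fun t => f x t) a y) : pdy f x y = a :=
  h.deriv

theorem uncurry_pdx_eq (hf : Differentiable ℝ (uncurry f)) :
    uncurry (pdx f) = fun p => fderiv ℝ (uncurry f) p (1, 0) :=
  funext fun p => pdx_eq_fderiv (hf p)

theorem uncurry_pdy_eq (hf : Differentiable ℝ (uncurry f)) :
    uncurry (pdy f) = fun p => fderiv ℝ (uncurry f) p (0, 1) :=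
  funext fun p => pdy_eq_fderiv (hf p)

theorem ContDiff.uncurry_pdx {n : WithTop ℕ∞} (hf : ContDiff ℝ (n + 1) (uncurry f)) :
    ContDiff ℝ n (uncurry (pdx f)) := by
  rw [uncurry_pdx_eq (hf.differentiable (by simp))]
  exact (hf.fderiv_right le_rfl).clm_apply contDiff_const

theorem ContDiff.uncurry_pdy {n : WithTop ℕ∞} (hf : ContDiff ℝ (n + 1) (uncurry f)) :
    ContDiff ℝ n (uncurry (pdy f)) := by
  rw [uncurry_pdy_eq (hf.differentiable (by simp))]
  exact (hf.fderiv_right le_rfl).clm_apply contDiff_const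

theorem pdy_pdx_comm (hf : ContDiff ℝ 2 (uncurry f)) (x y : ℝ) :
    pdy (pdx f) x y = pdx (pdy f) x y := by
  have hf' : ContDiff ℝ (1 + 1) (uncurry f) := hf
  have hd := hf.differentiable two_ne_zero
  have hdd : DifferentiableAt ℝ (fderiv ℝ (uncurry f)) (x, y) :=
    (hf'.fderiv_right le_rfl).differentiable one_ne_zero _
  rw [pdy_eq_fderiv (hf'.uncurry_pdx.differentiable one_ne_zero _),
    pdx_eq_fderiv (hf'.uncurry_pdy.differentiable one_ne_zero _), uncurry_pdx_eq hd,
    uncurry_pdy_eq hd, fderiv_clm_apply hdd (differentiableAt_const _),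
    fderiv_clm_apply hdd (differentiableAt_const _)]
  simpa using (hf.contDiffAt.isSymmSndFDerivAt (by simp)) (0, 1) (1, 0)

end PartialDerivatives

theorem Continuous.eq_zero_of_forall_mul_eq_zero {g : ℝ → ℝ} (hg : Continuous g)
    (hmul : ∀ t, t * g t = 0) (t : ℝ) : g t = 0 :=
  congrFun (hg.ext_on (dense_compl_singleton 0) continuous_const
    fun s hs => (mul_eq_zero.1 (hmul s)).resolve_left hs) t

section Killing

variable {μ h : ℝ} {ξ1 ξ2 : ℝ → ℝ → ℝ}

theorem sq_add_sq_sub_two_mul_pos (hh : h < 0) (x y : ℝ) : 0 < x ^ 2 + y ^ 2 - 2 * h := by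
  nlinarith [sq_nonneg x, sq_nonneg y]

theorem hasDerivAt_sq_add_sq_sub_left (h x y : ℝ) :
    HasDerivAt (fun t => t ^ 2 + y ^ 2 - 2 * h) (2 * x) x := by
  simpa using ((hasDerivAt_pow 2 x).add_const (y ^ 2)).sub_const (2 * h)

theorem hasDerivAt_sq_add_sq_sub_right (h x y : ℝ) :
    HasDerivAt (fun t => x ^ 2 + t ^ 2 - 2 * h) (2 * y) y := by
  simpa using (((hasDerivAt_pow 2 y).const_add (x ^ 2)).sub_const (2 * h))

namespace KillingSystem

theorem pdx_fst (hK : KillingSystem μ h ξ1 ξ2) (x y : ℝ) :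
    pdx ξ1 x y = 2 * (x * ξ1 x y + y * ξ2 x y) / (x ^ 2 + y ^ 2 - 2 * h) := by
  linear_combination (hK x y).2.1 / 2

theorem pdy_snd (hK : KillingSystem μ h ξ1 ξ2) (x y : ℝ) :
    pdy ξ2 x y = 2 * (x * ξ1 x y + y * ξ2 x y) / (x ^ 2 + y ^ 2 - 2 * h) := by
  linear_combination (hK x y).2.2 / 2

theorem pdy_fst (hK : KillingSystem μ h ξ1 ξ2) (x y : ℝ) : pdy ξ1 x y = -pdx ξ2 x y / μ := by
  linear_combination (hK x y).1

theorem pdx_pdx_fst (hK : KillingSystem μ h ξ1 ξ2) (hh : h < 0)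
    (hξ1 : Differentiable ℝ (uncurry ξ1)) (hξ2 : Differentiable ℝ (uncurry ξ2)) (x y : ℝ) :
    pdx (pdx ξ1) x y = 2 * (ξ1 x y + y * pdx ξ2 x y) / (x ^ 2 + y ^ 2 - 2 * h) := by
  have hξ1x := hK.pdx_fst x y ▸ hasDerivAt_pdx (hξ1 (x, y))
  have hQ := ((((hasDerivAt_id' x).fun_mul hξ1x).fun_add
    ((hasDerivAt_pdx (hξ2 (x, y))).const_mul y)).const_mul 2).fun_div
    (hasDerivAt_sq_add_sq_sub_left h x y) (sq_add_sq_sub_two_mul_pos hh x y).ne'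
  rw [show pdx ξ1 = _ from funext₂ hK.pdx_fst, pdx_eq_of_hasDerivAt hQ]
  field_simp [(sq_add_sq_sub_two_mul_pos hh x y).ne']
  ring

theorem pdy_pdx_fst (hK : KillingSystem μ h ξ1 ξ2) (hh : h < 0)
    (hξ1 : Differentiable ℝ (uncurry ξ1)) (hξ2 : Differentiable ℝ (uncurry ξ2)) (x y : ℝ) :
    pdy (pdx ξ1) x y = 2 * (ξ2 x y - x * pdx ξ2 x y / μ) / (x ^ 2 + y ^ 2 - 2 * h) := by
  have hξ1y := hK.pdy_fst x y ▸ hasDerivAt_pdy (hξ1 (x, y))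
  have hξ2y := hK.pdy_snd x y ▸ hasDerivAt_pdy (hξ2 (x, y))
  have hQ := (((hξ1y.const_mul x).fun_add ((hasDerivAt_id' y).fun_mul hξ2y)).const_mul 2).fun_div
    (hasDerivAt_sq_add_sq_sub_right h x y) (sq_add_sq_sub_two_mul_pos hh x y).ne'
  rw [show pdx ξ1 = _ from funext₂ hK.pdx_fst, pdy_eq_of_hasDerivAt hQ]
  field_simp [(sq_add_sq_sub_two_mul_pos hh x y).ne']
  ring

theorem pdx_pdx_snd (hK : KillingSystem μ h ξ1 ξ2) (hh : h < 0) (hμ : μ ≠ 0)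
    (hξ1 : ContDiff ℝ 2 (uncurry ξ1)) (hξ2 : Differentiable ℝ (uncurry ξ2)) (x y : ℝ) :
    pdx (pdx ξ2) x y = (2 * x * pdx ξ2 x y - 2 * μ * ξ2 x y) / (x ^ 2 + y ^ 2 - 2 * h) := by
  have hsymm := pdy_pdx_comm hξ1 x y
  rw [hK.pdy_pdx_fst hh (hξ1.differentiable two_ne_zero) hξ2,
    show pdy ξ1 = _ from funext₂ hK.pdy_fst] at hsymm
  have hW : pdx (fun x y => -pdx ξ2 x y / μ) x y = -pdx (pdx ξ2) x y / μ := by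
    simp only [pdx, deriv_div_const, deriv.fun_neg]
  rw [hW] at hsymm
  field_simp [(sq_add_sq_sub_two_mul_pos hh x y).ne'] at hsymm ⊢
  linear_combination hsymm

theorem pdy_pdx_snd (hK : KillingSystem μ h ξ1 ξ2) (hh : h < 0)
    (hξ1 : Differentiable ℝ (uncurry ξ1)) (hξ2 : ContDiff ℝ 2 (uncurry ξ2)) (x y : ℝ) :
    pdy (pdx ξ2) x y = 2 * (ξ1 x y + y * pdx ξ2 x y) / (x ^ 2 + y ^ 2 - 2 * h) := by
  have hpdy : pdy ξ2 = pdx ξ1 := funext₂ fun x y => (hK.pdy_snd x y).trans (hK.pdx_fst x y).symm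
  rw [pdy_pdx_comm hξ2, hpdy, hK.pdx_pdx_fst hh hξ1 (hξ2.differentiable two_ne_zero)]

theorem pdy_pdx_pdx_snd (hK : KillingSystem μ h ξ1 ξ2) (hh : h < 0) (hμ : μ ≠ 0)
    (hξ1 : ContDiff ℝ 2 (uncurry ξ1)) (hξ2 : ContDiff ℝ 2 (uncurry ξ2)) (x y : ℝ) :
    pdy (pdx (pdx ξ2)) x y = 4 * (1 - μ) * x * ξ1 x y / (x ^ 2 + y ^ 2 - 2 * h) ^ 2 := by
  have hξ2' : ContDiff ℝ (1 + 1) (uncurry ξ2) := hξ2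
  have hWy := hK.pdy_pdx_snd hh (hξ1.differentiable two_ne_zero) hξ2 x y ▸
    hasDerivAt_pdy (hξ2'.uncurry_pdx.differentiable one_ne_zero (x, y))
  have hξ2y := hK.pdy_snd x y ▸ hasDerivAt_pdy (hξ2.differentiable two_ne_zero (x, y))
  have hQ := ((hWy.const_mul (2 * x)).fun_sub (hξ2y.const_mul (2 * μ))).fun_div
    (hasDerivAt_sq_add_sq_sub_right h x y) (sq_add_sq_sub_two_mul_pos hh x y).ne'
  rw [show pdx (pdx ξ2) = _ from
      funext₂ (hK.pdx_pdx_snd hh hμ hξ1 (hξ2.differentiable two_ne_zero)),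
    pdy_eq_of_hasDerivAt hQ]
  field_simp [(sq_add_sq_sub_two_mul_pos hh x y).ne']
  ring

theorem pdx_pdy_pdx_snd (hK : KillingSystem μ h ξ1 ξ2) (hh : h < 0) (hμ : μ ≠ 0)
    (hξ1 : ContDiff ℝ 2 (uncurry ξ1)) (hξ2 : ContDiff ℝ 2 (uncurry ξ2)) (x y : ℝ) :
    pdx (pdy (pdx ξ2)) x y = 4 * (1 - μ) * y * ξ2 x y / (x ^ 2 + y ^ 2 - 2 * h) ^ 2 := by
  have hξ1x := hK.pdx_fst x y ▸ hasDerivAt_pdx (hξ1.differentiable two_ne_zero (x, y))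
  have hξ2' : ContDiff ℝ (1 + 1) (uncurry ξ2) := hξ2
  have hWx := hK.pdx_pdx_snd hh hμ hξ1 (hξ2.differentiable two_ne_zero) x y ▸
    hasDerivAt_pdx (hξ2'.uncurry_pdx.differentiable one_ne_zero (x, y))
  have hQ := ((hξ1x.fun_add (hWx.const_mul y)).const_mul 2).fun_div
    (hasDerivAt_sq_add_sq_sub_left h x y) (sq_add_sq_sub_two_mul_pos hh x y).ne'
  rw [show pdy (pdx ξ2) = _ from
      funext₂ (hK.pdy_pdx_snd hh (hξ1.differentiable two_ne_zero) hξ2),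
    pdx_eq_of_hasDerivAt hQ]
  field_simp [(sq_add_sq_sub_two_mul_pos hh x y).ne']
  ring

theorem mul_fst_eq_mul_snd (hK : KillingSystem μ h ξ1 ξ2) (hh : h < 0) (hμ₀ : μ ≠ 0)
    (hμ₁ : μ ≠ 1) (hξ1 : ContDiff ℝ 2 (uncurry ξ1)) (hξ2 : ContDiff ℝ 3 (uncurry ξ2)) (x y : ℝ) :
    x * ξ1 x y = y * ξ2 x y := by
  have hξ2' : ContDiff ℝ (2 + 1) (uncurry ξ2) := hξ2
  have hsymm := pdy_pdx_comm hξ2'.uncurry_pdx x y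
  rw [hK.pdy_pdx_pdx_snd hh hμ₀ hξ1 (hξ2.of_le (by norm_num)),
    hK.pdx_pdy_pdx_snd hh hμ₀ hξ1 (hξ2.of_le (by norm_num))] at hsymm
  field_simp [(sq_add_sq_sub_two_mul_pos hh x y).ne', sub_ne_zero.2 hμ₁.symm] at hsymm
  exact hsymm

theorem mul_fst_eq_zero (hK : KillingSystem μ h ξ1 ξ2) (hh : h < 0) (hμ : 1 < μ)
    (hξ1 : ContDiff ℝ 2 (uncurry ξ1)) (hξ2 : ContDiff ℝ 3 (uncurry ξ2)) (x y : ℝ) :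
    x * ξ1 x y = 0 := by
  have hP := hK.mul_fst_eq_mul_snd hh (by positivity) hμ.ne' hξ1 hξ2
  have hd := sq_add_sq_sub_two_mul_pos hh x y
  have hξ1x := hK.pdx_fst x y ▸ hasDerivAt_pdx (hξ1.differentiable two_ne_zero (x, y))
  have hξ1y := hK.pdy_fst x y ▸ hasDerivAt_pdy (hξ1.differentiable two_ne_zero (x, y))
  have hξ2x := hasDerivAt_pdx (hξ2.differentiable three_ne_zero (x, y))
  have hξ2y := hK.pdy_snd x y ▸ hasDerivAt_pdy (hξ2.differentiable three_ne_zero (x, y))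
  have hdx : 1 * ξ1 x y + x * (2 * (x * ξ1 x y + y * ξ2 x y) / (x ^ 2 + y ^ 2 - 2 * h)) =
      y * pdx ξ2 x y :=
    ((hasDerivAt_id' x).fun_mul hξ1x).unique
      (funext (fun t => hP t y) ▸ hξ2x.const_mul y)
  have hdy : x * (-pdx ξ2 x y / μ) =
      1 * ξ2 x y + y * (2 * (x * ξ1 x y + y * ξ2 x y) / (x ^ 2 + y ^ 2 - 2 * h)) :=
    (hξ1y.const_mul x).unique (funext (fun t => hP x t) ▸ (hasDerivAt_id' y).fun_mul hξ2y)
  field_simp at hdx hdy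
  have key : x * ξ1 x y * ((1 + μ) * (x ^ 2 + y ^ 2 - 2 * h) + 4 * x ^ 2 + 4 * μ * y ^ 2) = 0 := by
    linear_combination x * hdx - y * hdy
      + (μ * (x ^ 2 + y ^ 2 - 2 * h) + 2 * x ^ 2 + 2 * μ * y ^ 2) * hP x y
  have hpos : 0 < (1 + μ) * (x ^ 2 + y ^ 2 - 2 * h) + 4 * x ^ 2 + 4 * μ * y ^ 2 := by positivity
  exact (mul_eq_zero.1 key).resolve_right hpos.ne'

end KillingSystem

end Killing

/-- **The metric `g = (2/(x²+y²−2h)²)·diag(1, 1/μ)` with `μ > 1` and `h < 0`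
admits no nonzero real-analytic Killing vector field on `ℝ²`:** any
real-analytic solution `(ξ¹, ξ²)` of the Killing system vanishes identically. -/
theorem no_nonzero_analytic_killing_field
    (μ h : ℝ) (hμ : 1 < μ) (hh : h < 0)
    (ξ1 ξ2 : ℝ → ℝ → ℝ)
    (hξ1 : ∀ p : ℝ × ℝ, AnalyticAt ℝ (fun q : ℝ × ℝ => ξ1 q.1 q.2) p)
    (hξ2 : ∀ p : ℝ × ℝ, AnalyticAt ℝ (fun q : ℝ × ℝ => ξ2 q.1 q.2) p)
    (hK : KillingSystem μ h ξ1 ξ2) :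
    ∀ x y : ℝ, ξ1 x y = 0 ∧ ξ2 x y = 0 := by
  have hC1 : ContDiff ℝ 2 (uncurry ξ1) := contDiff_iff_contDiffAt.2 fun p => (hξ1 p).contDiffAt
  have hC2 : ContDiff ℝ 3 (uncurry ξ2) := contDiff_iff_contDiffAt.2 fun p => (hξ2 p).contDiffAt
  have hx (x y : ℝ) : x * ξ1 x y = 0 := hK.mul_fst_eq_zero hh hμ hC1 hC2 x y
  have hy (x y : ℝ) : y * ξ2 x y = 0 := by
    rw [← hK.mul_fst_eq_mul_snd hh (by positivity) hμ.ne' hC1 hC2, hx]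
  intro x y
  constructor
  · exact Continuous.eq_zero_of_forall_mul_eq_zero (g := fun t => ξ1 t y)
      (hC1.continuous.comp (continuous_id.prodMk continuous_const)) (hx · y) x
  · exact Continuous.eq_zero_of_forall_mul_eq_zero (g := fun t => ξ2 x t)
      (hC2.continuous.comp (continuous_const.prodMk continuous_id)) (hy x) y
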